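/- Let G₁ and G₂ be finite simple graphs with nonempty disjoint vertex sets, V(G₁) = {v₁,…,v_{n₁}}. Then θ(G₁ ⊻ G₂) ≥ n₁ + θ(G₂). Moreover, if there exists a permutation π of {1,…,n₁} such that π(i) ≠ i and v_i and v_{π(i)} are not adjacent in G₁ for every i, then θ(G₁ ⊻ G₂) = n₁ + θ(G₂). -/

import Mathlib

open scoped Classical

noncomputable def lovaszTheta {V : Type*} [Fintype V] (G : SimpleGraph V) : ℝ :=
  sSup { x : ℝ | ∃ B : Matrix V V ℝ, B.PosSemidef ∧ B.trace = 1 ∧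
    (∀ i j, G.Adj i j → B i j = 0) ∧ x = ∑ i, ∑ j, B i j }

/-- The non-neighbors-splitting (NNS) join of `G₁` and `G₂`: vertices are the vertices
of `G₁` (first summand), the primed copies of the vertices of `G₁` (second summand),
and the vertices of `G₂` (third summand). -/
def nnsJoin {α β : Type*} (G₁ : SimpleGraph α) (G₂ : SimpleGraph β) :
    SimpleGraph (α ⊕ α ⊕ β) where
  Adj x y :=
    match x, y with
    | .inl u, .inl v => G₁.Adj u v
    | .inl u, .inr (.inl v) => u ≠ v ∧ ¬ G₁.Adj u v
    | .inr (.inl u), .inl v => u ≠ v ∧ ¬ G₁.Adj u v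
    | .inl _, .inr (.inr _) => True
    | .inr (.inr _), .inl _ => True
    | .inr (.inr b), .inr (.inr c) => G₂.Adj b c
    | _, _ => False
  symm := by
    constructor
    rintro (u|u|b) (v|v|c) h
    · exact G₁.adj_symm h
    · obtain ⟨h1, h2⟩ := h; exact ⟨Ne.symm h1, fun a => h2 (G₁.adj_symm a)⟩
    · trivial
    · obtain ⟨h1, h2⟩ := h; exact ⟨Ne.symm h1, fun a => h2 (G₁.adj_symm a)⟩
    · exact h
    · exact h
    · trivial
    · exact h
    · exact G₂.adj_symm h
  loopless := by
    constructor
    rintro (u|u|b) h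
    · exact G₁.irrefl h
    · exact h
    · exact G₂.irrefl h

/-!
Writing a feasible matrix as a Gram matrix, `θ(G)` is the largest value of
`‖∑ i, v i‖² / ∑ i, ‖v i‖²` over families of vectors that are orthogonal along the edges of `G`.

Lower bound: take such a family `g` for `G₂`, with `S = ∑ g`, `t = ‖S‖²` and `q = ∑ ‖g k‖²`.
Put `0` on the vertices of `G₁`, `q • S` on every primed vertex and `t • g` on `G₂`. Primed
vertices are adjacent only to vertices of `G₁`, so this family is orthogonal along the edges of
the join, and its ratio is `n₁ + t / q`.

Upper bound: in a family `f` for the join, `v_i` and `v'_{π i}` are adjacent, so the vectors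
`f v_i + f v'_{π i}` carry the whole mass of the first two blocks. Cauchy–Schwarz bounds the squared
norm of their sum by `n₁` times that mass, and the `G₂` block contributes at most `θ(G₂)` times its
own mass. The estimate `(a + b)² ≤ (x + y) (a² / x + b² / y)` combines the two.
-/

open Finset
open scoped InnerProductSpace MatrixOrder ComplexOrder

theorem Matrix.PosSemidef.exists_eq_gram {𝕜 n : Type*} [RCLike 𝕜] [Fintype n]
    {B : Matrix n n 𝕜} (hB : B.PosSemidef) : ∃ v : n → EuclideanSpace 𝕜 n, B = Matrix.gram 𝕜 v := by
  obtain ⟨C, rfl⟩ := CStarAlgebra.nonneg_iff_eq_star_mul_self.mp hB.nonneg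
  refine ⟨fun i => WithLp.toLp 2 fun m => C m i, ?_⟩
  ext i j
  simp [Matrix.gram_apply, Matrix.mul_apply, PiLp.inner_apply, mul_comm]

section
variable {ι E : Type*}

theorem norm_sum_sq_le_card_mul [SeminormedAddCommGroup E] (s : Finset ι) (v : ι → E) :
    ‖∑ i ∈ s, v i‖ ^ 2 ≤ #s * ∑ i ∈ s, ‖v i‖ ^ 2 :=
  (pow_le_pow_left₀ (norm_nonneg _) (norm_sum_le s v) 2).trans (sq_sum_le_card_mul_sum_sq ..)

theorem norm_add_sq_le_mul_add [SeminormedAddCommGroup E] {u v : E} {a b P Q : ℝ}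
    (ha : 0 ≤ a) (hb : 0 ≤ b) (hP : 0 ≤ P) (hQ : 0 ≤ Q)
    (hu : ‖u‖ ^ 2 ≤ a * P) (hv : ‖v‖ ^ 2 ≤ b * Q) : ‖u + v‖ ^ 2 ≤ (a + b) * (P + Q) := by
  have hcross : 2 * (‖u‖ * ‖v‖) ≤ b * P + a * Q := by
    refine (pow_le_pow_iff_left₀ (by positivity) (by positivity) two_ne_zero).1 ?_
    calc (2 * (‖u‖ * ‖v‖)) ^ 2 = 4 * (‖u‖ ^ 2 * ‖v‖ ^ 2) := by ring
      _ ≤ 4 * ((a * P) * (b * Q)) := by gcongr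
      _ ≤ (b * P + a * Q) ^ 2 := by nlinarith [sq_nonneg (b * P - a * Q)]
  calc ‖u + v‖ ^ 2 ≤ (‖u‖ + ‖v‖) ^ 2 := by gcongr; exact norm_add_le u v
    _ ≤ (a + b) * (P + Q) := by nlinarith

variable [NormedAddCommGroup E] [InnerProductSpace ℝ E] [Fintype ι]

theorem Matrix.trace_gram_eq_sum_norm_sq (v : ι → E) :
    (Matrix.gram ℝ v).trace = ∑ i, ‖v i‖ ^ 2 := by
  simp [Matrix.trace, Matrix.gram_apply]

theorem Matrix.sum_gram_eq_norm_sum_sq (v : ι → E) :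
    ∑ i, ∑ j, Matrix.gram ℝ v i j = ‖∑ i, v i‖ ^ 2 := by
  rw [← real_inner_self_eq_norm_sq, sum_inner]
  simp [Matrix.gram_apply, inner_sum]

end

def SimpleGraph.OrthogonalOnEdges {V E : Type*} [Inner ℝ E] (G : SimpleGraph V) (v : V → E) :
    Prop :=
  ∀ ⦃i j⦄, G.Adj i j → ⟪v i, v j⟫_ℝ = 0

def lovaszThetaValues {V : Type*} [Fintype V] (G : SimpleGraph V) : Set ℝ :=
  { x : ℝ | ∃ B : Matrix V V ℝ, B.PosSemidef ∧ B.trace = 1 ∧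
    (∀ i j, G.Adj i j → B i j = 0) ∧ x = ∑ i, ∑ j, B i j }

section
variable {V : Type*} [Fintype V] (G : SimpleGraph V)

theorem lovaszTheta_eq_sSup : lovaszTheta G = sSup (lovaszThetaValues G) := rfl

theorem exists_orthogonalOnEdges_of_mem_lovaszThetaValues {x : ℝ}
    (hx : x ∈ lovaszThetaValues G) :
    ∃ v : V → EuclideanSpace ℝ V, G.OrthogonalOnEdges v ∧ ∑ i, ‖v i‖ ^ 2 = 1 ∧
      x = ‖∑ i, v i‖ ^ 2 := by
  obtain ⟨B, hB, htr, hadj, rfl⟩ := hx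
  obtain ⟨v, rfl⟩ := hB.exists_eq_gram
  exact ⟨v, fun i j h => hadj i j h, (Matrix.trace_gram_eq_sum_norm_sq v).symm.trans htr,
    Matrix.sum_gram_eq_norm_sum_sq v⟩

theorem mem_upperBounds_lovaszThetaValues {c : ℝ}
    (h : ∀ v : V → EuclideanSpace ℝ V, G.OrthogonalOnEdges v →
      ‖∑ i, v i‖ ^ 2 ≤ c * ∑ i, ‖v i‖ ^ 2) :
    c ∈ upperBounds (lovaszThetaValues G) := by
  intro x hx
  obtain ⟨v, hv, hnorm, rfl⟩ := exists_orthogonalOnEdges_of_mem_lovaszThetaValues G hx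
  simpa [hnorm] using h v hv

theorem lovaszTheta_le {c : ℝ} (hc : 0 ≤ c)
    (h : ∀ v : V → EuclideanSpace ℝ V, G.OrthogonalOnEdges v →
      ‖∑ i, v i‖ ^ 2 ≤ c * ∑ i, ‖v i‖ ^ 2) :
    lovaszTheta G ≤ c :=
  (lovaszTheta_eq_sSup G).trans_le <| Real.sSup_le (mem_upperBounds_lovaszThetaValues G h) hc

theorem lovaszTheta_nonneg : 0 ≤ lovaszTheta G := by
  rw [lovaszTheta_eq_sSup]
  refine Real.sSup_nonneg fun x hx => ?_
  obtain ⟨v, -, -, rfl⟩ := exists_orthogonalOnEdges_of_mem_lovaszThetaValues G hx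
  positivity

theorem bddAbove_lovaszThetaValues : BddAbove (lovaszThetaValues G) :=
  ⟨_, mem_upperBounds_lovaszThetaValues G fun v _ => by
    simpa using norm_sum_sq_le_card_mul univ v⟩

theorem norm_sum_sq_le_lovaszTheta_mul {E : Type*} [NormedAddCommGroup E] [InnerProductSpace ℝ E]
    {v : V → E} (hv : G.OrthogonalOnEdges v) :
    ‖∑ i, v i‖ ^ 2 ≤ lovaszTheta G * ∑ i, ‖v i‖ ^ 2 := by
  set q := ∑ i, ‖v i‖ ^ 2
  have hq0 : 0 ≤ q := sum_nonneg fun i _ => sq_nonneg ‖v i‖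
  rcases hq0.eq_or_lt with hq | hq
  · have hv0 : ∀ i, v i = 0 := fun i => by
      simpa using (sum_eq_zero_iff_of_nonneg fun i _ => sq_nonneg ‖v i‖).1 hq.symm i (mem_univ i)
    simp [hv0, ← hq]
  · rw [← div_le_iff₀ hq, lovaszTheta_eq_sSup]
    refine le_csSup (bddAbove_lovaszThetaValues G)
      ⟨q⁻¹ • Matrix.gram ℝ v, (Matrix.posSemidef_gram ℝ v).smul (inv_nonneg.2 hq.le), ?_, ?_, ?_⟩
    · rw [Matrix.trace_smul, Matrix.trace_gram_eq_sum_norm_sq, smul_eq_mul, inv_mul_cancel₀ hq.ne']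
    · intro i j h
      simp [Matrix.gram_apply, hv h]
    · simp only [Matrix.smul_apply, smul_eq_mul, ← mul_sum, Matrix.sum_gram_eq_norm_sum_sq]
      rw [div_eq_inv_mul]

theorem card_le_lovaszTheta_of_isIndepSet {s : Finset V} (hs : G.IsIndepSet s) :
    (#s : ℝ) ≤ lovaszTheta G := by
  rcases (s.card.cast_nonneg : (0 : ℝ) ≤ #s).eq_or_lt with hs0 | hs0
  · rw [← hs0]; exact lovaszTheta_nonneg G
  have horth : G.OrthogonalOnEdges fun i => if i ∈ s then (1 : ℝ) else 0 := by
    intro i j h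
    by_cases hi : i ∈ s <;> by_cases hj : j ∈ s <;> simp [hi, hj]
    exact hs hi hj (G.ne_of_adj h) h
  have key := norm_sum_sq_le_lovaszTheta_mul G horth
  simp only [sum_ite_mem, univ_inter, sum_const, nsmul_eq_mul, mul_one, apply_ite, norm_one,
    norm_zero, Real.norm_natCast] at key
  exact le_of_mul_le_mul_right (by simpa [sq] using key) hs0

end

section
variable {α β : Type*} (G₁ : SimpleGraph α) (G₂ : SimpleGraph β)

theorem orthogonalOnEdges_nnsJoin_sumElim_zero {E : Type*} [NormedAddCommGroup E]
    [InnerProductSpace ℝ E] (a : α → E) {b : β → E} (hb : G₂.OrthogonalOnEdges b) :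
    (nnsJoin G₁ G₂).OrthogonalOnEdges (Sum.elim 0 (Sum.elim a b)) := by
  rintro (u | u | k) (v | v | l) h <;> simp_all [nnsJoin, hb _]

theorem isIndepSet_nnsJoin_range_inr_inl :
    (nnsJoin G₁ G₂).IsIndepSet (Set.range fun u : α => (Sum.inr (Sum.inl u) : α ⊕ α ⊕ β)) := by
  rintro _ ⟨u, rfl⟩ _ ⟨v, rfl⟩ -
  simp [nnsJoin]

variable [Fintype α] [Fintype β]

theorem card_le_lovaszTheta_nnsJoin : (Fintype.card α : ℝ) ≤ lovaszTheta (nnsJoin G₁ G₂) := by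
  simpa using card_le_lovaszTheta_of_isIndepSet (nnsJoin G₁ G₂)
    (s := univ.map (Function.Embedding.inl.trans Function.Embedding.inr))
    (by simpa using isIndepSet_nnsJoin_range_inr_inl G₁ G₂)

theorem card_add_lovaszTheta_le_lovaszTheta_nnsJoin :
    (Fintype.card α : ℝ) + lovaszTheta G₂ ≤ lovaszTheta (nnsJoin G₁ G₂) := by
  set n : ℝ := (Fintype.card α : ℝ)
  have hn : n ≤ lovaszTheta (nnsJoin G₁ G₂) := card_le_lovaszTheta_nnsJoin G₁ G₂
  suffices lovaszTheta G₂ ≤ lovaszTheta (nnsJoin G₁ G₂) - n by linarith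
  refine lovaszTheta_le G₂ (sub_nonneg.2 hn) fun g hg => ?_
  set S := ∑ k, g k
  set t := ‖S‖ ^ 2
  set q := ∑ k, ‖g k‖ ^ 2
  let f : α ⊕ α ⊕ β → EuclideanSpace ℝ β := Sum.elim 0 (Sum.elim (fun _ => q • S) fun k => t • g k)
  have hf : (nnsJoin G₁ G₂).OrthogonalOnEdges f :=
    orthogonalOnEdges_nnsJoin_sumElim_zero G₁ G₂ _ fun k l h => by
      simp [inner_smul_left, inner_smul_right, hg h]
  have hsum : ∑ i, f i = (n * q + t) • S := by
    simp [f, Fintype.sum_sum_type, ← smul_sum, add_smul, mul_smul, n, S, Nat.cast_smul_eq_nsmul]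
  have hnorm : ∑ i, ‖f i‖ ^ 2 = q * t * (n * q + t) := by
    simp only [f, Fintype.sum_sum_type, Sum.elim_inl, Sum.elim_inr, Pi.zero_apply, norm_zero,
      ne_eq, OfNat.ofNat_ne_zero, not_false_eq_true, zero_pow, sum_const_zero, norm_smul,
      Real.norm_eq_abs, mul_pow, sq_abs, sum_const, card_univ, nsmul_eq_mul, norm_pow,
      ← mul_sum, zero_add, q, t, n]
    ring
  have key := norm_sum_sq_le_lovaszTheta_mul _ hf
  rw [hsum, hnorm, norm_smul, mul_pow, Real.norm_eq_abs, sq_abs] at key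
  change (n * q + t) ^ 2 * t ≤ _ at key
  have hq : 0 ≤ q := sum_nonneg fun k _ => sq_nonneg _
  have ht : 0 ≤ t := sq_nonneg _
  have hn0 : 0 ≤ n := Nat.cast_nonneg _
  clear_value n q t
  rcases ht.eq_or_lt with rfl | ht
  · exact mul_nonneg (sub_nonneg.2 hn) hq
  · have hpos : 0 < (n * q + t) * t := by positivity
    have hratio : n * q + t ≤ lovaszTheta (nnsJoin G₁ G₂) * q :=
      le_of_mul_le_mul_right (by linarith) hpos
    linarith

theorem lovaszTheta_nnsJoin_le (π : Equiv.Perm α)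
    (hπ : ∀ v, π v ≠ v ∧ ¬ G₁.Adj v (π v)) :
    lovaszTheta (nnsJoin G₁ G₂) ≤ Fintype.card α + lovaszTheta G₂ := by
  have hθ := lovaszTheta_nonneg G₂
  refine lovaszTheta_le _ (by positivity) fun f hf => ?_
  let w u := f (.inl u) + f (.inr (.inl (π u)))
  let g k := f (.inr (.inr k))
  have hsum : ∑ i, f i = ∑ u, w u + ∑ k, g k := by
    simp only [w, g, Fintype.sum_sum_type, sum_add_distrib,
      Equiv.sum_comp π fun u => f (.inr (.inl u))]
    abel
  have hw u : ‖w u‖ ^ 2 = ‖f (.inl u)‖ ^ 2 + ‖f (.inr (.inl (π u)))‖ ^ 2 := by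
    rw [norm_add_sq_real, hf (show (nnsJoin G₁ G₂).Adj (.inl u) (.inr (.inl (π u))) from
      ⟨(hπ u).1.symm, (hπ u).2⟩)]
    ring
  have hnorm : ∑ i, ‖f i‖ ^ 2 = ∑ u, ‖w u‖ ^ 2 + ∑ k, ‖g k‖ ^ 2 := by
    simp only [hw, g, Fintype.sum_sum_type, sum_add_distrib,
      Equiv.sum_comp π fun u => ‖f (.inr (.inl u))‖ ^ 2]
    ring
  rw [hsum, hnorm]
  exact norm_add_sq_le_mul_add (by positivity) hθ (by positivity) (by positivity)
    (by simpa using norm_sum_sq_le_card_mul univ w)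
    (norm_sum_sq_le_lovaszTheta_mul G₂ fun k l h => hf (show (nnsJoin G₁ G₂).Adj _ _ from h))

end

theorem stmt9_general {α β : Type*} [Fintype α] [Fintype β]
    (G₁ : SimpleGraph α) (G₂ : SimpleGraph β) :
    (Fintype.card α : ℝ) + lovaszTheta G₂ ≤ lovaszTheta (nnsJoin G₁ G₂) ∧
    ((∃ π : Equiv.Perm α, ∀ v, π v ≠ v ∧ ¬ G₁.Adj v (π v)) →
      lovaszTheta (nnsJoin G₁ G₂) = (Fintype.card α : ℝ) + lovaszTheta G₂) :=
  ⟨card_add_lovaszTheta_le_lovaszTheta_nnsJoin G₁ G₂, fun ⟨π, hπ⟩ =>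
    (lovaszTheta_nnsJoin_le G₁ G₂ π hπ).antisymm
      (card_add_lovaszTheta_le_lovaszTheta_nnsJoin G₁ G₂)⟩

theorem stmt9 {α β : Type*} [Fintype α] [Fintype β] [Nonempty α] [Nonempty β]
    (G₁ : SimpleGraph α) (G₂ : SimpleGraph β) :
    (Fintype.card α : ℝ) + lovaszTheta G₂ ≤ lovaszTheta (nnsJoin G₁ G₂) ∧
    ((∃ π : Equiv.Perm α, ∀ v, π v ≠ v ∧ ¬ G₁.Adj v (π v)) →
      lovaszTheta (nnsJoin G₁ G₂) = (Fintype.card α : ℝ) + lovaszTheta G₂) :=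
  stmt9_general G₁ G₂
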